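/- Let p be a prime, n a positive integer, u ∈ Z_p^n with u ≠ 0, and let W be a Z_p-subspace of Z_p^((p-1))[x_1,...,x_n] with W ≠ Z_p^((p-1))[x_1,...,x_n]. Set R = { y ∈ Z_p^n : y^(p-1) ∈ W }, and for k ∈ Z_p set V_k = { y ∈ Z_p^n : y·u = k } and R_k = R ∩ V_k. Then for every k ≠ 0 in Z_p, p · |R_k| ≤ (p-1) · |V_k| (equivalently |R_k|/|V_k| ≤ (p-1)/p). -/

import Mathlib

/-!
Choose a linear functional `φ` that kills `W` but not all forms of degree `p - 1`. The function
`y ↦ φ (y^(p-1))` is given by a polynomial `f` of total degree at most `p - 1`, so it suffices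
that `f` does not vanish identically on the hyperplane `V_k`: Schwartz–Zippel, applied to `f`
composed with an affine projection onto `V_k`, then bounds its zeros on `V_k` by a fraction
`(p - 1) / p`. Since `c^(p-1) = 1` for `c ≠ 0`, vanishing on `V_k` propagates to every `V_c` with
`c ≠ 0`, and the identity `∑ₜ (a + t b)^(p-1) = -b^(p-1)` propagates it to `V_0`. A polynomial
of degree `< p` in each variable that vanishes on all of `Z_pⁿ` is zero, and the coefficients of
`f` are `φ` of the monomials times multinomial coefficients of total `p - 1 < p`, which are units;
so `φ` would kill all forms of degree `p - 1`.
-/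

open MvPolynomial Finset

namespace FiniteField

variable {K : Type*} [Field K] [Fintype K]

theorem sum_pow_card_sub_one : ∑ t : K, t ^ (Fintype.card K - 1) = -1 := by
  classical
  have hq : Fintype.card K - 1 ≠ 0 := by have := Fintype.one_lt_card (α := K); omega
  rw [← add_sum_erase _ _ (mem_univ 0), zero_pow hq, zero_add,
    sum_congr rfl fun t ht ↦ pow_card_sub_one_eq_one t (ne_of_mem_erase ht), sum_const,
    card_erase_of_mem (mem_univ 0), card_univ, nsmul_one,
    Nat.cast_sub Fintype.card_pos, cast_card_eq_zero, Nat.cast_one, zero_sub]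

theorem sum_add_smul_pow_card_sub_one {A : Type*} [CommRing A] [Algebra K A] (a b : A) :
    ∑ t : K, (a + t • b) ^ (Fintype.card K - 1) = -b ^ (Fintype.card K - 1) := by
  set q := Fintype.card K
  have hq : 0 < q - 1 := by have := Fintype.one_lt_card (α := K); omega
  have hexpand : ∀ t : K, (a + t • b) ^ (q - 1) =
      ∑ i ∈ range (q - 1 + 1),
        t ^ (q - 1 - i) • (a ^ i * b ^ (q - 1 - i) * (q - 1).choose i) := by
    intro t
    rw [add_pow]
    refine sum_congr rfl fun i _ ↦ ?_
    rw [smul_pow, mul_smul_comm, smul_mul_assoc]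
  simp_rw [hexpand]
  rw [sum_comm, sum_eq_single_of_mem 0 (by simp)]
  · rw [← sum_smul, Nat.sub_zero, sum_pow_card_sub_one, pow_zero, one_mul,
      Nat.choose_zero_right, Nat.cast_one, mul_one, neg_one_smul]
  · intro i hi hi0
    rw [← sum_smul, sum_pow_lt_card_sub_one K _ (by simp at hi; omega), zero_smul]

end FiniteField

section LinearForm

variable {σ R : Type*} [Fintype σ] [CommSemiring R]

/-- `linearForm y ^ k` is the paper's `y^(k)`. -/
noncomputable def linearForm : (σ → R) →ₗ[R] MvPolynomial σ R :=
  Fintype.linearCombination R X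

theorem linearForm_apply (y : σ → R) : linearForm y = ∑ j, C (y j) * X j := by
  simp [linearForm, Fintype.linearCombination_apply, smul_eq_C_mul]

theorem totalDegree_linearForm_le (y : σ → R) :
    (linearForm y).totalDegree ≤ 1 := by
  rw [linearForm_apply]
  refine totalDegree_finsetSum_le fun j _ ↦ (totalDegree_mul _ _).trans ?_
  rw [totalDegree_C, zero_add]
  exact (totalDegree_monomial_le _ _).trans (by simp)

variable [DecidableEq σ]

theorem linearForm_pow (y : σ → R) (d : ℕ) :
    linearForm y ^ d = ∑ m ∈ univ.finsuppAntidiag d,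
      monomial m (Nat.multinomial univ m * m.prod fun i e ↦ y i ^ e) := by
  rw [linearForm_apply, sum_pow_eq_sum_piAntidiag]
  refine sum_equiv Finsupp.equivFunOnFinite.symm (by simp) fun c _ ↦ ?_
  simp [monomial_eq, Finsupp.prod_fintype, mul_pow, prod_mul_distrib, mul_assoc]

noncomputable def powFunctionalPoly (φ : MvPolynomial σ R →ₗ[R] R) (d : ℕ) :
    MvPolynomial σ R :=
  ∑ m ∈ univ.finsuppAntidiag d, monomial m (Nat.multinomial univ m * φ (monomial m 1))

variable (φ : MvPolynomial σ R →ₗ[R] R) (d : ℕ)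

theorem eval_powFunctionalPoly (y : σ → R) :
    eval y (powFunctionalPoly φ d) = φ (linearForm y ^ d) := by
  simp only [powFunctionalPoly, linearForm_pow, map_sum, eval_monomial]
  refine sum_congr rfl fun m _ ↦ ?_
  have hmonomial (a : R) : monomial m a = a • monomial m 1 := by
    rw [smul_monomial, smul_eq_mul, mul_one]
  rw [hmonomial (_ * _), map_smul, smul_eq_mul]
  ring

theorem totalDegree_powFunctionalPoly_le : (powFunctionalPoly φ d).totalDegree ≤ d := by
  refine totalDegree_finsetSum_le fun m hm ↦ (totalDegree_monomial_le _ _).trans ?_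
  simp_all [Finsupp.sum_fintype]

theorem coeff_powFunctionalPoly {m : σ →₀ ℕ} (hm : m.degree = d) :
    coeff m (powFunctionalPoly φ d) = Nat.multinomial univ m * φ (monomial m 1) := by
  simp [powFunctionalPoly, coeff_sum, coeff_monomial, Finsupp.degree_eq_sum, ← hm]

end LinearForm

theorem homogeneousSubmodule_le_ker_of_powFunctionalPoly_eq_zero {σ K : Type*} [Fintype σ]
    [DecidableEq σ] [Field K] {p : ℕ} [CharP K p] (hp : p.Prime) {d : ℕ} (hd : d < p)
    {φ : MvPolynomial σ K →ₗ[K] K} (h : powFunctionalPoly φ d = 0) :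
    homogeneousSubmodule σ K d ≤ LinearMap.ker φ := by
  rw [homogeneousSubmodule_eq_finsupp_supported, AddMonoidAlgebra.supported_eq_span_single,
    Submodule.span_le]
  rintro _ ⟨m, hm, rfl⟩
  have hmultinomial : (Nat.multinomial univ m : K) ≠ 0 := by
    rw [Ne, CharP.cast_eq_zero_iff K p]
    intro hdvd
    have := hdvd.trans (Dvd.intro_left _ (Nat.multinomial_spec univ m))
    rw [hp.dvd_factorial, ← Finsupp.degree_eq_sum, hm] at this
    omega
  have hcoeff := coeff_powFunctionalPoly φ d hm
  rw [h, coeff_zero, eq_comm, mul_eq_zero] at hcoeff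
  exact hcoeff.resolve_left hmultinomial

theorem exists_dotProduct_eq_one {σ K : Type*} [Fintype σ] [Field K] {u : σ → K}
    (hu : u ≠ 0) : ∃ z, z ⬝ᵥ u = 1 := by
  classical
  obtain ⟨j, hj⟩ := Function.ne_iff.mp hu
  exact ⟨Pi.single j (u j)⁻¹, by simp [inv_mul_cancel₀ hj]⟩

section FiniteField

variable {σ K : Type*} [Fintype σ] [Field K] [Fintype K]

theorem linearForm_smul_pow_card_sub_one {c : K} (hc : c ≠ 0) (y : σ → K) :
    linearForm (c • y) ^ (Fintype.card K - 1) = linearForm y ^ (Fintype.card K - 1) := by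
  rw [map_smul, smul_pow, FiniteField.pow_card_sub_one_eq_one c hc, one_smul]

theorem map_linearForm_pow_card_sub_one_eq_zero
    {φ : MvPolynomial σ K →ₗ[K] K} {u : σ → K} (hu : u ≠ 0) {k : K} (hk : k ≠ 0)
    (h : ∀ y, y ⬝ᵥ u = k → φ (linearForm y ^ (Fintype.card K - 1)) = 0) (y : σ → K) :
    φ (linearForm y ^ (Fintype.card K - 1)) = 0 := by
  have hoff (y : σ → K) (hy : y ⬝ᵥ u ≠ 0) :
      φ (linearForm y ^ (Fintype.card K - 1)) = 0 := by
    rw [← linearForm_smul_pow_card_sub_one (div_ne_zero hk hy)]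
    exact h _ (by rw [smul_dotProduct, smul_eq_mul, div_mul_cancel₀ _ hy])
  obtain hy | hy := ne_or_eq (y ⬝ᵥ u) 0
  · exact hoff y hy
  obtain ⟨z, hz⟩ := exists_dotProduct_eq_one hu
  -- on the line `y + t • (k • z)` only the point `t = 0` lies in `{v | v ⬝ᵥ u = 0}`
  have hline := congrArg φ
    (FiniteField.sum_add_smul_pow_card_sub_one (K := K) (linearForm y) (linearForm (k • z)))
  simp only [← map_smul, ← map_add, map_sum, map_neg] at hline
  rwa [sum_eq_single 0 (fun t _ ht ↦ hoff _ (by simp [add_dotProduct, hy, hz, ht, hk])) (by simp),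
    h (k • z) (by simp [hz]), neg_zero, zero_smul, add_zero] at hline

end FiniteField

theorem totalDegree_bind₁_le_of_totalDegree_le_one {σ τ R : Type*} [CommSemiring R]
    {g : σ → MvPolynomial τ R} (hg : ∀ i, (g i).totalDegree ≤ 1) (f : MvPolynomial σ R) :
    (bind₁ g f).totalDegree ≤ f.totalDegree := by
  conv_lhs => rw [f.as_sum, map_sum]
  refine totalDegree_finsetSum_le fun d hd ↦ ?_
  rw [bind₁_monomial]
  refine (totalDegree_mul _ _).trans ?_
  rw [totalDegree_C, zero_add]
  calc (∏ i ∈ d.support, g i ^ d i).totalDegree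
      ≤ ∑ i ∈ d.support, (g i ^ d i).totalDegree := totalDegree_finsetProd _ _
    _ ≤ ∑ i ∈ d.support, d i * 1 :=
        sum_le_sum fun i _ ↦ (totalDegree_pow _ _).trans (Nat.mul_le_mul_left _ (hg i))
    _ ≤ f.totalDegree := by simpa [Finsupp.sum] using le_totalDegree hd

theorem card_mul_ncard_eval_eq_zero_le {K : Type*} [CommRing K] [IsDomain K] [Fintype K]
    {n : ℕ} {f : MvPolynomial (Fin n) K} (hf : f ≠ 0) :
    Fintype.card K * {y | eval y f = 0}.ncard ≤ f.totalDegree * Fintype.card K ^ n := by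
  classical
  have hsz := schwartz_zippel_totalDegree hf univ
  rw [Fintype.piFinset_univ, card_univ, div_le_div_iff₀ (by positivity) (by positivity)] at hsz
  rw [Set.ncard_eq_toFinset_card', Set.toFinset_ofPred, mul_comm]
  exact_mod_cast hsz

section DotProductFiber

variable {σ R : Type*} [Fintype σ] [CommRing R] {u z : σ → R}

def dotProductFiberEquiv (hz : z ⬝ᵥ u = 1) (k : R) :
    (σ → R) ≃ {v : σ → R // v ⬝ᵥ u = k} × R where
  toFun y := (⟨y + (k - y ⬝ᵥ u) • z, by simp [add_dotProduct, hz]⟩, y ⬝ᵥ u - k)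
  invFun vt := vt.1 + vt.2 • z
  left_inv y := by module
  right_inv := by
    rintro ⟨⟨v, hv⟩, t⟩
    ext
    · simp [add_dotProduct, hv, hz]
    · simp [add_dotProduct, hv, hz]

theorem coe_dotProductFiberEquiv_fst (hz : z ⬝ᵥ u = 1) (k : R) (y : σ → R) :
    ((dotProductFiberEquiv hz k y).1 : σ → R) = y + (k - y ⬝ᵥ u) • z :=
  rfl

theorem ncard_setOf_dotProductFiberEquiv (hz : z ⬝ᵥ u = 1) (k : R) (P : (σ → R) → Prop) :
    {y | P (dotProductFiberEquiv hz k y).1}.ncard =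
      {v | P v ∧ v ⬝ᵥ u = k}.ncard * Nat.card R := by
  set e := dotProductFiberEquiv hz k
  calc {y | P (e y).1}.ncard
      = Nat.card {vt : {v // v ⬝ᵥ u = k} × R // P vt.1} :=
        Nat.card_congr (e.subtypeEquiv fun _ ↦ Iff.rfl)
    _ = Nat.card {v : {v // v ⬝ᵥ u = k} // P v} * Nat.card R :=
        (Nat.card_congr
          (@Equiv.prodSubtypeFstEquivSubtypeProd {v // v ⬝ᵥ u = k} R fun v ↦ P v.1)).trans
            (Nat.card_prod _ _)
    _ = {v | P v ∧ v ⬝ᵥ u = k}.ncard * Nat.card R := by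
        rw [Nat.card_congr (Equiv.subtypeSubtypeEquivSubtypeInter _ P),
          Nat.card_congr (Equiv.subtypeEquivRight fun _ ↦ and_comm)]
        rfl

end DotProductFiber

theorem card_mul_ncard_zeros_on_hyperplane_le {K : Type*} [Field K] [Fintype K] {n : ℕ}
    {u : Fin n → K} (hu : u ≠ 0) {k : K} {f : MvPolynomial (Fin n) K}
    (hf : ∃ y, y ⬝ᵥ u = k ∧ eval y f ≠ 0) :
    Fintype.card K * {y | eval y f = 0 ∧ y ⬝ᵥ u = k}.ncard ≤
      f.totalDegree * {y | y ⬝ᵥ u = k}.ncard := by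
  obtain ⟨z, hz⟩ := exists_dotProduct_eq_one hu
  set g := bind₁ (fun i ↦ X i - C (z i) * (linearForm u - C k)) f
  have heval (y : Fin n → K) : eval y g = eval (dotProductFiberEquiv hz k y).1 f := by
    refine (eval₂Hom_bind₁ _ _ _ f).trans (congrArg (eval · f) (funext fun i ↦ ?_))
    rw [coe_dotProductFiberEquiv_fst]
    simp [linearForm_apply, dotProduct, mul_comm]
    ring
  have hg : g ≠ 0 := by
    obtain ⟨y, hyu, hy⟩ := hf
    refine fun hg0 ↦ hy ?_
    simpa [heval, coe_dotProductFiberEquiv_fst, hyu] using congrArg (eval y) hg0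
  have hdeg : g.totalDegree ≤ f.totalDegree := by
    refine totalDegree_bind₁_le_of_totalDegree_le_one (fun i ↦ ?_) f
    refine (totalDegree_sub _ _).trans (max_le (totalDegree_X _).le ?_)
    refine (totalDegree_mul _ _).trans ?_
    rw [totalDegree_C, zero_add]
    exact (totalDegree_sub_C_le _ _).trans (totalDegree_linearForm_le u)
  have hzeros : {y | eval y g = 0}.ncard =
      {y | eval y f = 0 ∧ y ⬝ᵥ u = k}.ncard * Fintype.card K := by
    simp_rw [heval, ← Nat.card_eq_fintype_card]
    exact ncard_setOf_dotProductFiberEquiv hz k (eval · f = 0)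
  have hall := ncard_setOf_dotProductFiberEquiv hz k fun _ ↦ True
  simp only [true_and, Set.ofPred_true, Set.ncard_univ, Nat.card_eq_fintype_card,
    Fintype.card_fun, Fintype.card_fin] at hall
  refine Nat.le_of_mul_le_mul_right ?_ (Fintype.card_pos (α := K))
  calc Fintype.card K * {y | eval y f = 0 ∧ y ⬝ᵥ u = k}.ncard * Fintype.card K
      = Fintype.card K * {y | eval y g = 0}.ncard := by rw [hzeros, mul_assoc]
    _ ≤ g.totalDegree * Fintype.card K ^ n := card_mul_ncard_eval_eq_zero_le hg
    _ ≤ f.totalDegree * {y | y ⬝ᵥ u = k}.ncard * Fintype.card K := by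
        rw [hall, mul_assoc]; gcongr

theorem exists_dotProduct_eq_and_eval_powFunctionalPoly_ne_zero {σ : Type} [Fintype σ]
    [DecidableEq σ] {p : ℕ} [Fact p.Prime] {φ : MvPolynomial σ (ZMod p) →ₗ[ZMod p] ZMod p}
    (hφ : ¬homogeneousSubmodule σ (ZMod p) (p - 1) ≤ LinearMap.ker φ) {u : σ → ZMod p}
    (hu : u ≠ 0) {k : ZMod p} (hk : k ≠ 0) :
    ∃ y, y ⬝ᵥ u = k ∧ eval y (powFunctionalPoly φ (p - 1)) ≠ 0 := by
  have hp : p.Prime := Fact.out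
  by_contra! h
  simp only [eval_powFunctionalPoly] at h
  have hf0 : powFunctionalPoly φ (p - 1) = 0 := by
    refine eq_zero_of_eval_eq_zero σ (ZMod p) _ (fun y ↦ ?_) ?_
    · have := map_linearForm_pow_card_sub_one_eq_zero hu hk (by rwa [ZMod.card]) y
      rwa [ZMod.card, ← eval_powFunctionalPoly] at this
    · rw [ZMod.card]
      exact restrictTotalDegree_le_restrictDegree _ _ _
        ((mem_restrictTotalDegree _ _ _).mpr (totalDegree_powFunctionalPoly_le φ _))
  exact hφ (homogeneousSubmodule_le_ker_of_powFunctionalPoly_eq_zero hp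
    (Nat.sub_lt hp.pos one_pos) hf0)

theorem fraction_lemma_general {p n : ℕ} (hp : p.Prime)
    (u : Fin n → ZMod p) (hu : u ≠ 0)
    (W : Submodule (ZMod p) (MvPolynomial (Fin n) (ZMod p)))
    (hWle : W ≤ homogeneousSubmodule (Fin n) (ZMod p) (p - 1))
    (hWne : W ≠ homogeneousSubmodule (Fin n) (ZMod p) (p - 1)) :
    ∀ k : ZMod p, k ≠ 0 →
      p * ({y : Fin n → ZMod p |
              (∑ j, C (y j) * X j : MvPolynomial (Fin n) (ZMod p)) ^ (p - 1) ∈ W ∧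
              ∑ j, y j * u j = k}).ncard ≤
        (p - 1) * ({y : Fin n → ZMod p | ∑ j, y j * u j = k}).ncard := by
  have : Fact p.Prime := ⟨hp⟩
  intro k hk
  obtain ⟨x, hxH, hxW⟩ := SetLike.exists_of_lt (lt_of_le_of_ne hWle hWne)
  obtain ⟨φ, hφx, hWφ⟩ := Submodule.exists_le_ker_of_notMem hxW
  set f := powFunctionalPoly φ (p - 1)
  have hf := exists_dotProduct_eq_and_eval_powFunctionalPoly_ne_zero
    (fun hHφ ↦ hφx (hHφ hxH)) hu hk
  have hRf : {y : Fin n → ZMod p |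
      (∑ j, C (y j) * X j : MvPolynomial (Fin n) (ZMod p)) ^ (p - 1) ∈ W ∧
        ∑ j, y j * u j = k} ⊆ {y | eval y f = 0 ∧ y ⬝ᵥ u = k} := by
    rintro y ⟨hyW, hyu⟩
    exact ⟨by rw [eval_powFunctionalPoly, linearForm_apply]; exact hWφ hyW, hyu⟩
  calc _ ≤ p * {y | eval y f = 0 ∧ y ⬝ᵥ u = k}.ncard :=
        Nat.mul_le_mul_left _ (Set.ncard_le_ncard hRf)
    _ ≤ f.totalDegree * {y | y ⬝ᵥ u = k}.ncard := by
        simpa [ZMod.card] using card_mul_ncard_zeros_on_hyperplane_le hu hf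
    _ ≤ _ := Nat.mul_le_mul_right _ (totalDegree_powFunctionalPoly_le φ _)

/-- Main fraction lemma: if `u ≠ 0` and `W` is a proper subspace of the space of
homogeneous polynomials of degree `p-1` over `ZMod p`, then for every nonzero
`k ∈ ZMod p`, the set `R_k = {y : y^(p-1) ∈ W and y·u = k}` occupies at most a
`(p-1)/p` fraction of `V_k = {y : y·u = k}`, i.e. `p * |R_k| ≤ (p-1) * |V_k|`. -/
theorem fraction_lemma {p n : ℕ} (hp : p.Prime) (hn : 0 < n)
    (u : Fin n → ZMod p) (hu : u ≠ 0)
    (W : Submodule (ZMod p) (MvPolynomial (Fin n) (ZMod p)))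
    (hWle : W ≤ homogeneousSubmodule (Fin n) (ZMod p) (p - 1))
    (hWne : W ≠ homogeneousSubmodule (Fin n) (ZMod p) (p - 1)) :
    ∀ k : ZMod p, k ≠ 0 →
      p * ({y : Fin n → ZMod p |
              (∑ j, C (y j) * X j : MvPolynomial (Fin n) (ZMod p)) ^ (p - 1) ∈ W ∧
              ∑ j, y j * u j = k}).ncard ≤
        (p - 1) * ({y : Fin n → ZMod p | ∑ j, y j * u j = k}).ncard :=
  fraction_lemma_general hp u hu W hWle hWne
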